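/- arXiv:1501.04789 — 4 statements merged into one kernel-verified Lean document; each statement's English description precedes it below -/
import Mathlib

section
/- The comonad □A = Col × A on Rel is lax monoidal with respect to the tensor product A ⊗ B = A × B: the relations m_{A,B} = {(((m,a),(m,b)),(m,(a,b))) | a ∈ A, b ∈ B, m ∈ Col} : □A ⊗ □B → □(A ⊗ B) and m_1 = {(⋆,(m,⋆)) | m ∈ Col} : 1 → □1 satisfy the coherence axioms of a lax monoidal functor, and the counit and comultiplication of □ are monoidal natural transformations. -/
set_option maxHeartbeats 4000000
set_option maxRecDepth 10000


def Rel' (α β : Type) : Type := α → β → Prop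

def rid (α : Type) : Rel' α α := fun a b => a = b

def rcomp {α β γ : Type} (R : Rel' α β) (S : Rel' β γ) : Rel' α γ :=
  fun a c => ∃ b, R a b ∧ S b c

/-- Tensor product of relations (cartesian product of sets). -/
def tensorRel {α β γ δ : Type} (R : Rel' α β) (S : Rel' γ δ) : Rel' (α × γ) (β × δ) :=
  fun p q => R p.1 q.1 ∧ S p.2 q.2

/-- Graph of a function, as a relation. -/
def graphRel {α β : Type} (f : α → β) : Rel' α β := fun a b => f a = b

def boxRel (Col : Type) {α β : Type} (R : Rel' α β) : Rel' (Col × α) (Col × β) :=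
  fun p q => p.1 = q.1 ∧ R p.2 q.2

def boxCounit (Col : Type) (ε : Col) (α : Type) : Rel' (Col × α) α :=
  fun p a => p.1 = ε ∧ p.2 = a

def boxComult (Col : Type) (mx : Col → Col → Col) (α : Type) :
    Rel' (Col × α) (Col × (Col × α)) :=
  fun p q => p.1 = mx q.1 q.2.1 ∧ p.2 = q.2.2

/-- The lax monoidal strength
`m_{A,B} = {(((m,a),(m,b)),(m,(a,b)))} : □A ⊗ □B → □(A ⊗ B)`. -/
def mPair (Col : Type) (α β : Type) : Rel' ((Col × α) × (Col × β)) (Col × (α × β)) :=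
  fun p q => p.1.1 = q.1 ∧ p.2.1 = q.1 ∧ p.1.2 = q.2.1 ∧ p.2.2 = q.2.2

/-- The lax monoidal unit `m_1 = {(⋆,(m,⋆)) | m ∈ Col} : 1 → □1`. -/
def mUnit (Col : Type) : Rel' PUnit (Col × PUnit) := fun _ _ => True

/-- Associator of the cartesian monoidal structure. -/
def assocMap {α β γ : Type} : (α × β) × γ → α × (β × γ) :=
  fun p => (p.1.1, (p.1.2, p.2))

/-- Left unitor. -/
def lunitMap {α : Type} : PUnit × α → α := Prod.snd

/-- Right unitor. -/
def runitMap {α : Type} : α × PUnit → α := Prod.fst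

/-- The color comonad `□A = Col × A` on `Rel` is lax monoidal for the tensor
`A ⊗ B = A × B`: the structure maps `m_{A,B}` and `m_1` are natural and satisfy the
coherence axioms of a lax monoidal functor, and the counit and comultiplication of `□`
are monoidal natural transformations. -/
theorem color_comonad_lax_monoidal
    (Col : Type) (mx : Col → Col → Col) (ε : Col)
    (hassoc : ∀ a b c, mx (mx a b) c = mx a (mx b c))
    (hcomm : ∀ a b, mx a b = mx b a)
    (hidem : ∀ a, mx a a = a)
    (hneut : ∀ a, mx ε a = a) :
    -- naturality of m
    (∀ (α α' β β' : Type) (R : Rel' α α') (S : Rel' β β'),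
      rcomp (tensorRel (boxRel Col R) (boxRel Col S)) (mPair Col α' β')
        = rcomp (mPair Col α β) (boxRel Col (tensorRel R S))) ∧
    -- associativity coherence
    (∀ (α β γ : Type),
      rcomp (tensorRel (mPair Col α β) (rid (Col × γ)))
        (rcomp (mPair Col (α × β) γ) (boxRel Col (graphRel (assocMap (α := α) (β := β) (γ := γ)))))
      = rcomp (graphRel (assocMap (α := Col × α) (β := Col × β) (γ := Col × γ)))
          (rcomp (tensorRel (rid (Col × α)) (mPair Col β γ)) (mPair Col α (β × γ)))) ∧
    -- left unitality coherence
    (∀ (α : Type),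
      rcomp (tensorRel (mUnit Col) (rid (Col × α)))
        (rcomp (mPair Col PUnit α) (boxRel Col (graphRel (lunitMap (α := α)))))
      = graphRel (lunitMap (α := Col × α))) ∧
    -- right unitality coherence
    (∀ (α : Type),
      rcomp (tensorRel (rid (Col × α)) (mUnit Col))
        (rcomp (mPair Col α PUnit) (boxRel Col (graphRel (runitMap (α := α)))))
      = graphRel (runitMap (α := Col × α))) ∧
    -- the counit is a monoidal natural transformation
    (∀ (α β : Type),
      rcomp (mPair Col α β) (boxCounit Col ε (α × β))
        = tensorRel (boxCounit Col ε α) (boxCounit Col ε β)) ∧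
    (rcomp (mUnit Col) (boxCounit Col ε PUnit) = rid PUnit) ∧
    -- the comultiplication is a monoidal natural transformation
    (∀ (α β : Type),
      rcomp (mPair Col α β) (boxComult Col mx (α × β))
        = rcomp (tensorRel (boxComult Col mx α) (boxComult Col mx β))
            (rcomp (mPair Col (Col × α) (Col × β)) (boxRel Col (mPair Col α β)))) ∧
    (rcomp (mUnit Col) (boxComult Col mx PUnit)
        = rcomp (mUnit Col) (boxRel Col (mUnit Col))) := by
  refine ⟨?_, ?_, ?_, ?_, ?_, ?_, ?_, ?_⟩
  · intro α α' β β' R S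
    funext p q
    simp only [rcomp, tensorRel, mPair, boxRel, Prod.exists, Prod.mk.injEq, eq_iff_iff]
    constructor <;> aesop (config := { maxRuleApplications := 4000 })
  · intro α β γ
    funext p q
    obtain ⟨⟨⟨m1, a⟩, m2, b⟩, m3, c⟩ := p
    obtain ⟨n, a', b', c'⟩ := q
    simp only [rcomp, tensorRel, mPair, boxRel, rid, graphRel, assocMap, Prod.exists,
      Prod.mk.injEq, eq_iff_iff]
    constructor
    · rintro ⟨a1, a2, b1, a3, b2, ⟨⟨rfl, h2, rfl, rfl⟩, rfl, rfl⟩, x, x4, y, y3,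
        ⟨rfl, h7, ⟨rfl, rfl⟩, rfl⟩, hn, ha, hb, hc⟩
      exact ⟨n, a', n, b', n, c', ⟨⟨hn, ha⟩, ⟨h2.trans hn, hb⟩, h7.trans hn, hc⟩,
        n, a', n, b', c', ⟨⟨rfl, rfl⟩, rfl, rfl, rfl, rfl⟩, rfl, rfl, rfl, rfl, rfl⟩
    · rintro ⟨a1, b1, a2, b2, a3, b3, ⟨⟨rfl, rfl⟩, ⟨rfl, rfl⟩, rfl, rfl⟩, x, y, x5, x6, y4,
        ⟨⟨rfl, rfl⟩, rfl, h9, rfl, rfl⟩, hn, hn2, ha, hb, hc⟩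
      exact ⟨n, a', b', n, c', ⟨⟨hn, hn2, ha, hb⟩, h9.trans hn2, hc⟩,
        n, a', b', c', ⟨rfl, rfl, ⟨rfl, rfl⟩, rfl⟩, rfl, rfl, rfl, rfl⟩
  · intro α
    funext p q
    simp only [rcomp, tensorRel, mPair, boxRel, rid, graphRel, mUnit, lunitMap, Prod.exists,
      Prod.mk.injEq, eq_iff_iff]
    constructor <;> aesop (config := { maxRuleApplications := 4000 })
  · intro α
    funext p q
    simp only [rcomp, tensorRel, mPair, boxRel, rid, graphRel, mUnit, runitMap, Prod.exists,
      Prod.mk.injEq, eq_iff_iff]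
    constructor <;> aesop (config := { maxRuleApplications := 4000 })
  · intro α β
    funext p q
    simp only [rcomp, mPair, boxCounit, tensorRel, Prod.exists, Prod.mk.injEq, eq_iff_iff]
    constructor <;> aesop (config := { maxRuleApplications := 4000 })
  · funext p q
    simp only [rcomp, mUnit, boxCounit, rid, Prod.exists, eq_iff_iff]
    constructor <;> aesop (config := { maxRuleApplications := 4000 })
  · intro α β
    funext p q
    obtain ⟨⟨m1, a⟩, m2, b⟩ := p
    obtain ⟨n, k, a', b'⟩ := q
    simp only [rcomp, mPair, boxComult, tensorRel, boxRel, Prod.exists, Prod.mk.injEq, eq_iff_iff]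
    constructor
    · rintro ⟨a1, a2, b1, ⟨rfl, h2, rfl, rfl⟩, hm, ha, hb⟩
      exact ⟨n, k, a', n, k, b', ⟨⟨hm, ha⟩, h2.trans hm, hb⟩,
        n, k, a', k, b', ⟨rfl, rfl, ⟨rfl, rfl⟩, rfl, rfl⟩, rfl, rfl, rfl, rfl, rfl⟩
    · rintro ⟨a1, a2, b1, a3, a4, b2, ⟨⟨h1, rfl⟩, h3, rfl⟩, x, x5, y, x6, y3,
        ⟨rfl, h6, ⟨rfl, rfl⟩, rfl, rfl⟩, hn, hk, hk2, ha, hb⟩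
      exact ⟨mx n k, a', b', ⟨h1.trans (by rw [hn, hk]), h3.trans (by rw [h6, hn, hk2]), ha, hb⟩,
        rfl, rfl, rfl⟩
  · funext p q
    simp only [rcomp, mUnit, boxComult, boxRel, Prod.exists, Prod.mk.injEq, eq_iff_iff]
    constructor <;> aesop (config := { maxRuleApplications := 4000 })
end

section
/- The color comonad □A = Col × A distributes over the finite-multiset exponential comonad !A = M_fin(A) on Rel: the relation λ_A = {( {|(m,a₁),…,(m,a_k)|}, (m, {|a₁,…,a_k|}) ) | m ∈ Col, a_i ∈ A} : !□A → □!A is a distributive law of comonads, so that the composite A ↦ !(□A) carries a comonad structure on Rel. -/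
/-- Counit of the color comonad. -/
def dBox (Col : Type) (ε : Col) (α : Type) : Rel' (Col × α) α :=
  fun p a => p.1 = ε ∧ p.2 = a

/-- Comultiplication of the color comonad. -/
def deltaBox (Col : Type) (mx : Col → Col → Col) (α : Type) :
    Rel' (Col × α) (Col × (Col × α)) :=
  fun p q => p.1 = mx q.1 q.2.1 ∧ p.2 = q.2.2

/-- Dereliction of the finite multiset exponential. -/
def derM (α : Type) : Rel' (Multiset α) α := fun m a => m = {a}

/-- Digging of the finite multiset exponential. -/
def digM (α : Type) : Rel' (Multiset α) (Multiset (Multiset α)) :=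
  fun m mm => mm.join = m

/-- The distributive law
`λ_A = {({|(m,a₁),…,(m,a_k)|}, (m,{|a₁,…,a_k|}))} : !□A → □!A`. -/
def lamR (Col : Type) (α : Type) : Rel' (Multiset (Col × α)) (Col × Multiset α) :=
  fun m p => m = p.2.map (fun a => (p.1, a))

/-- Counit of the composite comonad `!□`. -/
def epsT (Col : Type) (ε : Col) (α : Type) : Rel' (Multiset (Col × α)) α :=
  rcomp (derM (Col × α)) (dBox Col ε α)

/-- Comultiplication of the composite comonad `!□`, built from digging, the box
comultiplication and the distributive law. -/
def deltaT (Col : Type) (mx : Col → Col → Col) (α : Type) :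
    Rel' (Multiset (Col × α)) (Multiset (Col × Multiset (Col × α))) :=
  rcomp (digM (Col × α))
    (rcomp (Multiset.Rel (Multiset.Rel (deltaBox Col mx α)))
      (Multiset.Rel (lamR Col (Col × α))))

-- auxiliary lemmas
lemma rel_eq_map {α β : Type} (f : β → α) (s : Multiset α) (t : Multiset β) :
    Multiset.Rel (fun a b => a = f b) s t ↔ s = t.map f := by
  rw [← Multiset.rel_map_right, Multiset.rel_eq]

lemma deltaBox_eq (Col : Type) (mx : Col → Col → Col) (α : Type) :
    deltaBox Col mx α = fun p q => p = (mx q.1 q.2.1, q.2.2) := by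
  funext p q; exact propext (by simp [deltaBox, Prod.ext_iff])

lemma rel_deltaBox (Col : Type) (mx : Col → Col → Col) (α : Type) :
    Multiset.Rel (deltaBox Col mx α)
      = fun m n => m = n.map (fun r => (mx r.1 r.2.1, r.2.2)) := by
  funext m n
  rw [deltaBox_eq]
  exact propext (rel_eq_map _ _ _)

lemma rel_lamR (Col α : Type) :
    Multiset.Rel (lamR Col α)
      = fun n X => n = X.map (fun p => p.2.map (fun a => (p.1, a))) := by
  funext n X
  exact propext (rel_eq_map (fun p : Col × Multiset α => p.2.map (fun a => (p.1, a))) n X)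

lemma rel_rel_deltaBox (Col : Type) (mx : Col → Col → Col) (α : Type) :
    Multiset.Rel (Multiset.Rel (deltaBox Col mx α))
      = fun mm nn => mm = nn.map (Multiset.map (fun r => (mx r.1 r.2.1, r.2.2))) := by
  funext mm nn
  rw [rel_deltaBox]
  exact propext (rel_eq_map _ _ _)

lemma deltaT_iff (Col : Type) (mx : Col → Col → Col) (α : Type)
    (m : Multiset (Col × α)) (X : Multiset (Col × Multiset (Col × α))) :
    deltaT Col mx α m X
      ↔ m = X.bind (fun p => p.2.map (fun a => (mx p.1 a.1, a.2))) := by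
  simp only [deltaT, rcomp, digM, rel_rel_deltaBox, rel_lamR]
  constructor
  · rintro ⟨mm, rfl, nn, rfl, rfl⟩
    simp [Multiset.bind, Multiset.map_map, Function.comp]
  · rintro rfl
    refine ⟨_, ?_, _, rfl, rfl⟩
    simp [Multiset.bind, Multiset.map_map, Function.comp]

lemma epsT_iff (Col : Type) (ε : Col) (α : Type) (X : Multiset (Col × α)) (b : α) :
    epsT Col ε α X b ↔ X = {(ε, b)} := by
  constructor
  · rintro ⟨p, hp, h1, h2⟩
    subst hp
    cases p
    simp_all [derM, dBox]
  · rintro rfl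
    exact ⟨(ε, b), rfl, rfl, rfl⟩

lemma rel_fst_eq {Col α β : Type} {c : Col} {R : Rel' α β} {m : Multiset (Col × α)}
    {t : Multiset β}
    (h : Multiset.Rel (fun p b => p.1 = c ∧ R p.2 b) m t) :
    ∃ s, m = s.map (fun a => (c, a)) ∧ Multiset.Rel R s t := by
  induction h with
  | zero => exact ⟨0, by simp, Multiset.Rel.zero⟩
  | @cons a b _ _ hab _ ih =>
    obtain ⟨s, rfl, hs⟩ := ih
    refine ⟨a.2 ::ₘ s, ?_, Multiset.Rel.cons hab.2 hs⟩
    have h2 : a = (c, a.2) := Prod.ext hab.1 rfl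
    rw [Multiset.map_cons, ← h2]

lemma part1 (Col : Type) (α β : Type) (R : Rel' α β) :
    rcomp (Multiset.Rel (boxRel Col R)) (lamR Col β)
      = rcomp (lamR Col α) (boxRel Col (Multiset.Rel R)) := by
  funext m q
  apply propext
  constructor
  · rintro ⟨n, hmn, rfl⟩
    replace hmn := Multiset.rel_map_right.1 hmn
    obtain ⟨s, rfl, hs⟩ := rel_fst_eq hmn
    exact ⟨(q.1, s), rfl, rfl, hs⟩
  · rintro ⟨⟨c, s⟩, rfl, h1, h2⟩
    refine ⟨q.2.map (fun b => (q.1, b)), ?_, rfl⟩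
    refine Multiset.rel_map.2 ?_
    simp only at h1; subst h1
    exact Multiset.Rel.mono h2 (fun a _ b _ h => ⟨rfl, h⟩)

lemma part2 (Col : Type) (α : Type) :
    rcomp (lamR Col α) (boxRel Col (derM α)) = derM (Col × α) := by
  funext m q
  apply propext
  constructor
  · rintro ⟨⟨c, s⟩, rfl, h1, h2⟩
    simp only at h1 h2
    simp [derM] at h2 ⊢
    subst h1; subst h2
    simp [Prod.ext_iff]
  · rintro rfl
    exact ⟨(q.1, {q.2}), by simp [lamR], rfl, rfl⟩

lemma part3 (Col : Type) (ε : Col) (α : Type) :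
    rcomp (lamR Col α) (dBox Col ε (Multiset α)) = Multiset.Rel (dBox Col ε α) := by
  funext m s
  apply propext
  have hd : dBox Col ε α = fun p a => p = (ε, a) := by
    funext p a; exact propext (by simp [dBox, Prod.ext_iff])
  rw [hd, rel_eq_map]
  constructor
  · rintro ⟨⟨c, t⟩, rfl, h1, h2⟩
    simp only at h1 h2; subst h1; subst h2; rfl
  · rintro rfl
    exact ⟨(ε, s), rfl, rfl, rfl⟩

lemma part4 (Col : Type) (α : Type) :
    rcomp (lamR Col α) (boxRel Col (digM α))
      = rcomp (digM (Col × α))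
          (rcomp (Multiset.Rel (lamR Col α)) (lamR Col (Multiset α))) := by
  funext m q
  apply propext
  rw [show (rcomp (lamR Col α) (boxRel Col (digM α)) m q
      ↔ m = q.2.join.map (fun a => (q.1, a))) from ?_,
    show (rcomp (digM (Col × α))
        (rcomp (Multiset.Rel (lamR Col α)) (lamR Col (Multiset α))) m q
      ↔ m = q.2.join.map (fun a => (q.1, a))) from ?_]
  · constructor
    · rintro ⟨mm, rfl, nn, hmn, rfl⟩
      rw [rel_lamR] at hmn
      subst hmn
      simp [Multiset.map_map, Function.comp]
    · rintro rfl
      refine ⟨q.2.map (fun s => s.map (fun a => (q.1, a))),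
        ?_, q.2.map (fun s => (q.1, s)), ?_, rfl⟩
      · simp [digM, Multiset.map_map, Function.comp]
      · rw [rel_lamR]
        simp [Multiset.map_map, Function.comp]
  · constructor
    · rintro ⟨⟨c, s⟩, rfl, h1, h2⟩
      simp only [digM, boxRel] at h1 h2
      subst h1; rw [← h2]
    · rintro rfl
      exact ⟨(q.1, q.2.join), rfl, rfl, rfl⟩

lemma part5 (Col : Type) (mx : Col → Col → Col) (α : Type) :
    rcomp (lamR Col α) (deltaBox Col mx (Multiset α))
      = rcomp (Multiset.Rel (deltaBox Col mx α))
          (rcomp (lamR Col (Col × α)) (boxRel Col (lamR Col α))) := by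
  funext m q
  apply propext
  constructor
  · rintro ⟨⟨c, s⟩, rfl, h1, h2⟩
    simp only [deltaBox] at h1 h2
    subst h1; subst h2
    refine ⟨q.2.2.map (fun a => (q.1, (q.2.1, a))),
      ?_, (q.1, q.2.2.map (fun a => (q.2.1, a))), ?_, rfl, rfl⟩
    · rw [rel_deltaBox]
      simp [Multiset.map_map, Function.comp]
    · simp [lamR, Multiset.map_map, Function.comp]
  · rintro ⟨n, hmn, ⟨c, s⟩, rfl, h1, h2⟩
    rw [rel_deltaBox] at hmn
    simp only [lamR] at h1 h2
    subst hmn; subst h1; subst h2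
    exact ⟨(mx q.1 q.2.1, q.2.2), by simp [lamR, Multiset.map_map, Function.comp], rfl, rfl⟩

lemma bind_singleton_id {α : Type} (s : Multiset α) :
    (s.bind fun a => ({a} : Multiset α)) = s := by
  simpa using Multiset.bind_singleton (s := s) (f := id)

lemma part6 (Col : Type) (mx : Col → Col → Col) (ε : Col)
    (hneut : ∀ a, mx ε a = a) (α : Type) :
    rcomp (deltaT Col mx α) (epsT Col ε (Multiset (Col × α)))
      = rid (Multiset (Col × α)) := by
  funext m b
  apply propext
  simp only [rcomp, deltaT_iff, epsT_iff, rid]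
  constructor
  · rintro ⟨X, rfl, rfl⟩
    simp [hneut]
  · rintro rfl
    exact ⟨{(ε, m)}, by simp [hneut], rfl⟩

lemma part7 (Col : Type) (mx : Col → Col → Col) (ε : Col)
    (hcomm : ∀ a b, mx a b = mx b a) (hneut : ∀ a, mx ε a = a) (α : Type) :
    rcomp (deltaT Col mx α) (Multiset.Rel (boxRel Col (epsT Col ε α)))
      = rid (Multiset (Col × α)) := by
  have hbe : boxRel Col (epsT Col ε α)
      = fun p b => p = (b.1, ({(ε, b.2)} : Multiset (Col × α))) := by
    funext p b
    exact propext (by simp [boxRel, epsT_iff, Prod.ext_iff, and_comm])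
  have hmix : ∀ b : Col × α, mx b.1 ε = b.1 :=
    fun b => (hcomm b.1 ε).trans (hneut b.1)
  funext m m'
  apply propext
  simp only [rcomp, deltaT_iff, rid, hbe, rel_eq_map]
  constructor
  · rintro ⟨X, rfl, rfl⟩
    simp [Multiset.bind_map, hmix]
    exact bind_singleton_id m'
  · rintro rfl
    refine ⟨m.map (fun b => (b.1, ({(ε, b.2)} : Multiset (Col × α)))), ?_, rfl⟩
    rw [Multiset.bind_map]
    simp only [Multiset.map_singleton, hmix]
    exact (bind_singleton_id m).symm

lemma part8 (Col : Type) (mx : Col → Col → Col)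
    (hassoc : ∀ a b c, mx (mx a b) c = mx a (mx b c)) (α : Type) :
    rcomp (deltaT Col mx α) (deltaT Col mx (Multiset (Col × α)))
      = rcomp (deltaT Col mx α)
          (Multiset.Rel (boxRel Col (deltaT Col mx α))) := by
  have hbd : boxRel Col (deltaT Col mx α)
      = fun p q => p = (q.1, q.2.bind (fun r => r.2.map (fun a => (mx r.1 a.1, a.2)))) := by
    funext p q
    exact propext (by simp [boxRel, deltaT_iff, Prod.ext_iff])
  have key : ∀ (Y : Multiset (Col × Multiset (Col × Multiset (Col × α)))),
      ((Y.bind fun q => q.2.map (fun p => (mx q.1 p.1, p.2))).bind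
          fun p => p.2.map fun a => (mx p.1 a.1, a.2))
        = ((Y.map fun q =>
              (q.1, q.2.bind fun r => r.2.map fun a => (mx r.1 a.1, a.2))).bind
            fun p => p.2.map fun a => (mx p.1 a.1, a.2)) := by
    intro Y
    simp [Multiset.bind_assoc, Multiset.bind_map, Multiset.map_bind,
      Multiset.map_map, Function.comp, hassoc]
  funext m Y
  apply propext
  simp only [rcomp, deltaT_iff, hbd, rel_eq_map]
  constructor
  · rintro ⟨X, rfl, rfl⟩
    exact ⟨_, key Y, rfl⟩
  · rintro ⟨X, rfl, rfl⟩
    exact ⟨_, (key Y).symm, rfl⟩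

/-- The color comonad `□A = Col × A` distributes over the finite-multiset exponential
comonad `!A = M_fin(A)` on `Rel`: the relation `λ_A : !□A → □!A` is a distributive
law of comonads (natural and compatible with the counits and comultiplications of
both comonads), so that the composite `A ↦ !(□A)` carries a comonad structure. -/
theorem color_distributes_over_exponential
    (Col : Type) (mx : Col → Col → Col) (ε : Col)
    (hassoc : ∀ a b c, mx (mx a b) c = mx a (mx b c))
    (hcomm : ∀ a b, mx a b = mx b a)
    (hidem : ∀ a, mx a a = a)
    (hneut : ∀ a, mx ε a = a) :
    -- naturality of λ
    (∀ (α β : Type) (R : Rel' α β),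
      rcomp (Multiset.Rel (boxRel Col R)) (lamR Col β)
        = rcomp (lamR Col α) (boxRel Col (Multiset.Rel R))) ∧
    -- compatibility with the counit of !
    (∀ (α : Type),
      rcomp (lamR Col α) (boxRel Col (derM α)) = derM (Col × α)) ∧
    -- compatibility with the counit of □
    (∀ (α : Type),
      rcomp (lamR Col α) (dBox Col ε (Multiset α)) = Multiset.Rel (dBox Col ε α)) ∧
    -- compatibility with the comultiplication of !
    (∀ (α : Type),
      rcomp (lamR Col α) (boxRel Col (digM α))
        = rcomp (digM (Col × α))
            (rcomp (Multiset.Rel (lamR Col α)) (lamR Col (Multiset α)))) ∧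
    -- compatibility with the comultiplication of □
    (∀ (α : Type),
      rcomp (lamR Col α) (deltaBox Col mx (Multiset α))
        = rcomp (Multiset.Rel (deltaBox Col mx α))
            (rcomp (lamR Col (Col × α)) (boxRel Col (lamR Col α)))) ∧
    -- the composite A ↦ !(□A) is a comonad
    (∀ (α : Type),
      rcomp (deltaT Col mx α) (epsT Col ε (Multiset (Col × α)))
        = rid (Multiset (Col × α))) ∧
    (∀ (α : Type),
      rcomp (deltaT Col mx α) (Multiset.Rel (boxRel Col (epsT Col ε α)))
        = rid (Multiset (Col × α))) ∧
    (∀ (α : Type),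
      rcomp (deltaT Col mx α) (deltaT Col mx (Multiset (Col × α)))
        = rcomp (deltaT Col mx α)
            (Multiset.Rel (boxRel Col (deltaT Col mx α)))) := by
  exact ⟨part1 Col, part2 Col, part3 Col ε, part4 Col, part5 Col mx,
    part6 Col mx ε hneut, part7 Col mx ε hcomm hneut, part8 Col mx hassoc⟩
end

section
/- On the complete lattice given by the n+1-fold product of a complete lattice D (n even), the formula Y f = ν x_n . μ x_{n−1} . ⋯ . ν x_2 . μ x_1 . ν x_0 . f(x_0, …, x_n), where μ and ν denote least and greatest fixpoints of monotone maps, is well-defined for every monotone function f : D^{n+1} → D, and Y f is a fixpoint of the diagonal map x ↦ f(x, …, x). -/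
/-- Knaster–Tarski least fixpoint of a (monotone) map on a complete lattice. -/
def lfp' {D : Type} [CompleteLattice D] (f : D → D) : D := sInf {x | f x ≤ x}

/-- Knaster–Tarski greatest fixpoint of a (monotone) map on a complete lattice. -/
def gfp' {D : Type} [CompleteLattice D] (f : D → D) : D := sSup {x | x ≤ f x}

/-- The fixpoint operator used at depth `k`: `ν` for even `k`, `μ` for odd `k`. -/
def fixAt {D : Type} [CompleteLattice D] (k : ℕ) (f : D → D) : D :=
  if k % 2 = 0 then gfp' f else lfp' f

/-- The nested alternating fixpoint
`ν x_n. μ x_{n-1}. ⋯ ν x_2. μ x_1. ν x_0. f(x_0, …, x_n)`,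
read innermost-first: variable `x_i` is bound by `ν` if `i` is even and by `μ` if
`i` is odd. -/
def nestFix {D : Type} [CompleteLattice D] : (n : ℕ) → (((Fin (n + 1)) → D) → D) → D
  | 0, f => gfp' (fun x => f (fun _ => x))
  | n + 1, f => fixAt (n + 1) (fun y => nestFix n (fun v => f (Fin.snoc v y)))

lemma gfp'_fixed {D : Type} [CompleteLattice D] {f : D → D} (hf : Monotone f) :
    f (gfp' f) = gfp' f := by
  have h1 : gfp' f ≤ f (gfp' f) :=
    sSup_le fun x hx => le_trans hx (hf (le_sSup hx))
  exact le_antisymm (le_sSup (hf h1)) h1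

lemma lfp'_fixed {D : Type} [CompleteLattice D] {f : D → D} (hf : Monotone f) :
    f (lfp' f) = lfp' f := by
  have h1 : f (lfp' f) ≤ lfp' f :=
    le_sInf fun x hx => le_trans (hf (sInf_le hx)) hx
  exact le_antisymm h1 (sInf_le (hf h1))

lemma fixAt_fixed {D : Type} [CompleteLattice D] (k : ℕ) {f : D → D} (hf : Monotone f) :
    f (fixAt k f) = fixAt k f := by
  unfold fixAt
  split
  · exact gfp'_fixed hf
  · exact lfp'_fixed hf

lemma gfp'_mono {D : Type} [CompleteLattice D] {f g : D → D} (h : ∀ x, f x ≤ g x) :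
    gfp' f ≤ gfp' g :=
  sSup_le_sSup fun x hx => le_trans hx (h x)

lemma lfp'_mono {D : Type} [CompleteLattice D] {f g : D → D} (h : ∀ x, f x ≤ g x) :
    lfp' f ≤ lfp' g :=
  le_sInf fun x hx => sInf_le (le_trans (h x) hx)

lemma fixAt_mono {D : Type} [CompleteLattice D] (k : ℕ) {f g : D → D}
    (h : ∀ x, f x ≤ g x) : fixAt k f ≤ fixAt k g := by
  unfold fixAt
  split
  · exact gfp'_mono h
  · exact lfp'_mono h

lemma nestFix_mono {D : Type} [CompleteLattice D] :
    ∀ (n : ℕ) (f g : ((Fin (n + 1)) → D) → D), (∀ v, f v ≤ g v) →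
      nestFix n f ≤ nestFix n g
  | 0, f, g, h => gfp'_mono fun x => h _
  | n + 1, f, g, h =>
    fixAt_mono (n + 1) fun y => nestFix_mono n _ _ fun v => h _

lemma snoc_le_snoc {D : Type} [CompleteLattice D] {n : ℕ} {v w : Fin n → D} {y z : D}
    (hv : v ≤ w) (hy : y ≤ z) : (Fin.snoc v y : Fin (n + 1) → D) ≤ Fin.snoc w z := by
  intro i
  induction i using Fin.lastCases with
  | last => simpa using hy
  | cast i => simpa using hv i

lemma nestFix_diag {D : Type} [CompleteLattice D] :
    ∀ (n : ℕ) (f : ((Fin (n + 1)) → D) → D), Monotone f →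
      f (fun _ => nestFix n f) = nestFix n f
  | 0, f, hf => by
    have : Monotone (fun x => f (fun _ : Fin 1 => x)) :=
      fun a b hab => hf (fun i => hab)
    simpa [nestFix] using gfp'_fixed this
  | n + 1, f, hf => by
    set g : D → D := fun y => nestFix n (fun v => f (Fin.snoc v y)) with hg
    have hgmono : Monotone g := by
      intro a b hab
      exact nestFix_mono n _ _ fun v => hf (snoc_le_snoc le_rfl hab)
    have hY : nestFix (n + 1) f = fixAt (n + 1) g := rfl
    set Y := nestFix (n + 1) f with hYdef
    have hfix : g Y = Y := by rw [hY]; exact fixAt_fixed (n + 1) hgmono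
    -- Y = nestFix n f' where f' v = f (snoc v Y)
    have hf' : Monotone (fun v => f (Fin.snoc v Y)) :=
      fun a b hab => hf (snoc_le_snoc hab le_rfl)
    have hfix' : (nestFix n fun v => f (Fin.snoc v Y)) = Y := hfix
    have hih := nestFix_diag n (fun v => f (Fin.snoc v Y)) hf'
    simp only [hfix'] at hih
    -- hih : f (Fin.snoc (fun _ => Y) Y) = Y
    have hconst : (Fin.snoc (fun _ : Fin (n + 1) => Y) Y : Fin (n + 2) → D)
        = fun _ => Y := by
      funext i
      induction i using Fin.lastCases with
      | last => simp
      | cast i => simp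
    rw [hconst] at hih
    exact hih

/-- For `n` even and `f : D^{n+1} → D` monotone on a complete lattice `D`, the
alternating nested fixpoint `Y f = ν x_n. μ x_{n-1}. ⋯ μ x_1. ν x_0. f(x_0,…,x_n)`
is well defined and is a fixpoint of the diagonal map `x ↦ f(x,…,x)`. -/
theorem nested_fixpoint_is_diagonal_fixpoint
    {D : Type} [CompleteLattice D] (n : ℕ) (hn : Even n)
    (f : ((Fin (n + 1)) → D) → D) (hf : Monotone f) :
    f (fun _ => nestFix n f) = nestFix n f :=
  nestFix_diag n f hf
end

section
/- For any set A, the set M_count(A) of finite-or-countable multisets over A, with multiset sum, forms a commutative monoid in which the sum of countably many elements is well defined; and the assignment A ↦ M_count(A) extends to a functor on Rel sending R : A → B to the relation relating two finite-or-countable multisets m, m' iff there is a bijective matching between them pairing elements related by R. This functor carries a comonad structure on Rel (dereliction {({|a|}, a)} and countable digging), generalizing the finite-multiset exponential. -/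
/-- Finite-or-countable multisets over `α`: multiplicity functions `α → ℕ ∪ {ℵ₀}`
with finite-or-countable support. -/
def MCount (α : Type) : Type :=
  {f : α → ℕ∞ // (Function.support f).Countable}

/-- Pointwise sum of two finite-or-countable multisets (as a multiplicity function). -/
def madd {α : Type} (f g : MCount α) : α → ℕ∞ := fun a => f.1 a + g.1 a

/-- The empty multiset (as a multiplicity function). -/
def mzero (α : Type) : α → ℕ∞ := fun _ => 0

/-- Sum of countably many finite-or-countable multisets (as a multiplicity
function), given as the supremum of the finite partial sums. -/
noncomputable def csum {α : Type} (g : ℕ → MCount α) : α → ℕ∞ :=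
  fun a => ⨆ s : Finset ℕ, ∑ i ∈ s, (g i).1 a

/-- Relational lifting of `R : A → B` to finite-or-countable multisets: `m` and `m'`
are related iff there is a bijective matching (a coupling `k`) pairing their
elements by `R`. -/
def MRel {α β : Type} (R : Rel' α β) : Rel' (MCount α) (MCount β) :=
  fun f g => ∃ k : MCount (α × β),
    (∀ p : α × β, k.1 p ≠ 0 → R p.1 p.2) ∧
    (∀ a, f.1 a = ⨆ s : Finset β, ∑ b ∈ s, k.1 (a, b)) ∧
    (∀ b, g.1 b = ⨆ s : Finset α, ∑ a ∈ s, k.1 (a, b))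

/-- The singleton multiset `{|a|}` (as a multiplicity function). -/
noncomputable def msingle {α : Type} (a : α) : α → ℕ∞ := open scoped Classical in fun x => if x = a then (1 : ℕ∞) else 0

/-- Dereliction `{({|a|}, a)} : M_count(A) → A`. -/
def derC (α : Type) : Rel' (MCount α) α := fun f a => f.1 = msingle a

/-- The sum `Σ_μ M(μ)·μ` of a finite-or-countable multiset of finite-or-countable
multisets (as a multiplicity function). -/
noncomputable def flattenC {α : Type} (M : MCount (MCount α)) : α → ℕ∞ :=
  fun a => ⨆ s : Finset (MCount α), ∑ μ ∈ s, M.1 μ * μ.1 a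

/-- Countable digging: `m` is related to `{|m₁, m₂, …|}` iff `m = Σ_i m_i`. -/
def digC (α : Type) : Rel' (MCount α) (MCount (MCount α)) :=
  fun f M => f.1 = flattenC M

open scoped ENNReal
namespace CME

open scoped ENNReal



lemma E_inj {m n : ℕ∞} (h : (m : ℝ≥0∞) = (n : ℝ≥0∞)) : m = n :=
  ENat.toENNReal_inj.mp h

lemma E_zero_iff {n : ℕ∞} : (n : ℝ≥0∞) = 0 ↔ n = 0 := by
  rw [← ENat.toENNReal_zero]; exact ⟨E_inj, fun h => by rw [h]⟩

lemma toENNReal_iSup {ι : Sort*} (f : ι → ℕ∞) :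
    ((⨆ i, f i : ℕ∞) : ℝ≥0∞) = ⨆ i, ((f i : ℕ∞) : ℝ≥0∞) := by
  cases isEmpty_or_nonempty ι with
  | inl h => simp [iSup_of_empty]
  | inr h =>
    refine le_antisymm ?_ (iSup_le fun i => ENat.toENNReal_mono (le_iSup f i))
    rcases eq_or_ne (⨆ i, f i) ⊤ with htop | hne
    · rw [htop]
      have hn : ∀ n : ℕ, (n : ℝ≥0∞) ≤ ⨆ i, ((f i : ℕ∞) : ℝ≥0∞) := by
        intro n
        have h1 : (n : ℕ∞) < ⨆ i, f i := htop ▸ WithTop.coe_lt_top n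
        rcases lt_iSup_iff.mp h1 with ⟨i, hi⟩
        calc (n : ℝ≥0∞) = ((n : ℕ∞) : ℝ≥0∞) := by simp
          _ ≤ ((f i : ℕ∞) : ℝ≥0∞) := ENat.toENNReal_mono hi.le
          _ ≤ _ := le_iSup (fun i => ((f i : ℕ∞) : ℝ≥0∞)) i
      have : (⊤ : ℝ≥0∞) ≤ ⨆ i, ((f i : ℕ∞) : ℝ≥0∞) := by
        rw [← ENNReal.iSup_natCast]; exact iSup_le hn
      simpa using this
    · obtain ⟨m, hm⟩ := WithTop.ne_top_iff_exists.mp hne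
      cases m with
      | zero => rw [← hm]; exact (ENat.toENNReal_mono bot_le).trans (le_iSup (fun i => ((f i : ℕ∞) : ℝ≥0∞)) h.some)
      | succ k =>
        have h1 : (k : ℕ∞) < ⨆ i, f i := by
          rw [← hm]
          exact Nat.cast_lt.mpr (Nat.lt_succ_self k)
        rcases lt_iSup_iff.mp h1 with ⟨i, hi⟩
        have h2 : ((k + 1 : ℕ) : ℕ∞) ≤ f i := by
          have := (ENat.add_one_le_iff (n := f i) (WithTop.coe_ne_top (a := k))).mpr hi
          exact_mod_cast this
        calc ((⨆ i, f i : ℕ∞) : ℝ≥0∞) = (((k + 1 : ℕ) : ℕ∞) : ℝ≥0∞) := by rw [← hm]; rfl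

          _ ≤ ((f i : ℕ∞) : ℝ≥0∞) := ENat.toENNReal_mono h2
          _ ≤ _ := le_iSup (fun i => ((f i : ℕ∞) : ℝ≥0∞)) i

lemma toE_finsum {ι : Type} (s : Finset ι) (h : ι → ℕ∞) :
    ((∑ i ∈ s, h i : ℕ∞) : ℝ≥0∞) = ∑ i ∈ s, ((h i : ℕ∞) : ℝ≥0∞) :=
  map_sum ENat.toENNRealRingHom h s

lemma toE_SS {ι : Type} (h : ι → ℕ∞) :
    ((⨆ s : Finset ι, ∑ i ∈ s, h i : ℕ∞) : ℝ≥0∞) = ∑' i, ((h i : ℕ∞) : ℝ≥0∞) := by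
  rw [ENNReal.tsum_eq_iSup_sum, toENNReal_iSup]
  exact iSup_congr fun s => toE_finsum s h

lemma SS_eq_iff {ι : Type} {x : ℕ∞} {h : ι → ℕ∞} :
    x = (⨆ s : Finset ι, ∑ i ∈ s, h i) ↔ (x : ℝ≥0∞) = ∑' i, ((h i : ℕ∞) : ℝ≥0∞) := by
  rw [← toE_SS]
  exact ⟨fun hh => by rw [hh], fun hh => E_inj hh⟩

lemma SS_eq_zero_iff {ι : Type} {h : ι → ℕ∞} :
    (⨆ s : Finset ι, ∑ i ∈ s, h i) = 0 ↔ ∀ i, h i = 0 := by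
  rw [← E_zero_iff, toE_SS, ENNReal.tsum_eq_zero]
  exact forall_congr' fun i => E_zero_iff




/-- classical indicator -/
noncomputable def ind (P : Prop) : ℝ≥0∞ := open scoped Classical in if P then 1 else 0

@[simp] lemma ind_pos {P : Prop} (h : P) : ind P = 1 := if_pos h
@[simp] lemma ind_neg {P : Prop} (h : ¬ P) : ind P = 0 := if_neg h
lemma ind_mul {P : Prop} (x : ℝ≥0∞) : ind P * x = ind P * x := rfl

/-- multiplicity function of the multiset represented by the family `u`. -/
noncomputable def cnt {ι α : Type} (u : ι → α) (a : α) : ℕ∞ := (u ⁻¹' {a}).encard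

lemma cnt_support {ι α : Type} [Countable ι] (u : ι → α) :
    (Function.support (cnt u)).Countable := by
  apply (Set.countable_range u).mono
  intro a ha
  obtain ⟨i, hi⟩ := Set.nonempty_of_encard_ne_zero (s := u ⁻¹' {a}) ha
  exact ⟨i, hi⟩

lemma E_cnt {ι α : Type} (u : ι → α) (a : α) :
    ((cnt u a : ℕ∞) : ℝ≥0∞) = ∑' i, ind (u i = a) := by
  rw [cnt, ← ENNReal.tsum_set_one, tsum_subtype (u ⁻¹' {a}) (fun _ => 1)]
  refine tsum_congr fun i => ?_
  by_cases h : u i = a <;>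
    simp [Set.indicator_apply, Set.mem_preimage, Set.mem_singleton_iff, ind, h]

lemma tsum_ind_single {β : Type} (b : β) (m : β → ℝ≥0∞) :
    ∑' c : β, ind (b = c) * m c = m b := by
  rw [tsum_eq_single b (fun c hc => by rw [ind_neg fun hh => hc hh.symm, zero_mul])]
  rw [ind_pos rfl, one_mul]

lemma E_cnt_pair_fst {ι α β : Type} (u : ι → α) (v : ι → β) (a : α) :
    ∑' b : β, ((cnt (fun i => (u i, v i)) (a, b) : ℕ∞) : ℝ≥0∞) = (cnt u a : ℝ≥0∞) := by
  rw [E_cnt]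
  calc ∑' b : β, ((cnt (fun i => (u i, v i)) (a, b) : ℕ∞) : ℝ≥0∞)
      = ∑' b : β, ∑' i, ind (u i = a) * ind (v i = b) := by
        refine tsum_congr fun b => ?_
        rw [E_cnt]
        refine tsum_congr fun i => ?_
        by_cases h1 : u i = a
        · by_cases h2 : v i = b
          · rw [ind_pos (Prod.ext h1 h2), ind_pos h1, ind_pos h2, one_mul]
          · rw [ind_neg (fun hh => h2 (congrArg Prod.snd hh)), ind_neg h2, mul_zero]
        · rw [ind_neg (fun hh => h1 (congrArg Prod.fst hh)), ind_neg h1, zero_mul]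
    _ = ∑' i, ∑' b : β, ind (u i = a) * ind (v i = b) := ENNReal.tsum_comm
    _ = ∑' i, ind (u i = a) := by
        refine tsum_congr fun i => ?_
        rw [ENNReal.tsum_mul_left]
        rw [tsum_eq_single (v i) (fun c hc => ind_neg fun hh => hc hh.symm)]
        rw [ind_pos rfl, mul_one]

lemma E_cnt_pair_snd {ι α β : Type} (u : ι → α) (v : ι → β) (b : β) :
    ∑' a : α, ((cnt (fun i => (u i, v i)) (a, b) : ℕ∞) : ℝ≥0∞) = (cnt v b : ℝ≥0∞) := by
  have key : ∀ a, cnt (fun i => (u i, v i)) (a, b) = cnt (fun i => (v i, u i)) (b, a) := by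
    intro a
    unfold cnt
    congr 1
    ext i
    simp [Prod.ext_iff, and_comm]
  simp_rw [key]
  exact E_cnt_pair_fst v u b

lemma tsum_cnt_mul {κ γ : Type} (w : κ → γ) (m : γ → ℝ≥0∞) :
    ∑' c, ((cnt w c : ℕ∞) : ℝ≥0∞) * m c = ∑' j, m (w j) := by
  calc ∑' c, ((cnt w c : ℕ∞) : ℝ≥0∞) * m c
      = ∑' c, ∑' j, ind (w j = c) * m c := by
        refine tsum_congr fun c => ?_
        rw [E_cnt, ← ENNReal.tsum_mul_right]
    _ = ∑' j, ∑' c, ind (w j = c) * m c := ENNReal.tsum_comm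
    _ = ∑' j, m (w j) := tsum_congr fun j => tsum_ind_single (w j) m

lemma encard_Iio (c : ℕ∞) : ({n : ℕ | (n : ℕ∞) < c}).encard = c := by
  cases c with
  | top =>
    have h : {n : ℕ | (n : ℕ∞) < ⊤} = Set.univ := by
      ext n; simp [WithTop.coe_lt_top]
    rw [h]
    simpa using Set.Infinite.encard_eq Set.infinite_univ
  | coe m =>
    have h : {n : ℕ | (n : ℕ∞) < (m : ℕ∞)} = ↑(Finset.range m) := by
      ext n; simp [Nat.cast_lt]
    rw [h, Set.encard_coe_eq_coe_finsetCard, Finset.card_range]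

lemma equiv_of_encard_eq {A B : Type} [Countable A] [Countable B] {s : Set A} {t : Set B}
    (h : s.encard = t.encard) : Nonempty (↥s ≃ ↥t) := by
  rcases s.finite_or_infinite with hs | hs
  · have ht : t.Finite := by
      rw [← Set.encard_ne_top_iff] at hs ⊢
      rwa [← h]
    haveI := hs.fintype
    haveI := ht.fintype
    refine ⟨Fintype.equivOfCardEq ?_⟩
    have h2 : ((Fintype.card ↥s : ℕ) : ℕ∞) = ((Fintype.card ↥t : ℕ) : ℕ∞) := by
      rw [← Set.toFinset_card, ← Set.toFinset_card, ← Set.encard_eq_coe_toFinset_card,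
        ← Set.encard_eq_coe_toFinset_card, h]
    exact_mod_cast h2
  · have ht : t.Infinite := by
      rw [← Set.encard_eq_top_iff] at hs ⊢
      rwa [← h]
    haveI := hs.to_subtype
    haveI := ht.to_subtype
    exact nonempty_equiv_of_countable

lemma cnt_comp_equiv {ι κ γ : Type} (φ : ι ≃ κ) (q : κ → γ) (c : γ) :
    cnt (fun i => q (φ i)) c = cnt q c := by
  unfold cnt
  have h1 : (fun i => q (φ i)) ⁻¹' {c} = φ.symm '' (q ⁻¹' {c}) := by
    rw [Equiv.image_eq_preimage_symm]
    simp [Set.preimage_preimage]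
  rw [h1, φ.symm.injective.encard_image]

lemma exists_matching {ι κ β : Type} [Countable ι] [Countable κ] (v : ι → β) (p : κ → β)
    (h : ∀ b, cnt v b = cnt p b) : ∃ φ : ι ≃ κ, ∀ i, p (φ i) = v i := by
  have e : ∀ b, { i // v i = b } ≃ { j // p j = b } := fun b =>
    Classical.choice (equiv_of_encard_eq (h b))
  exact ⟨Equiv.ofFiberEquiv e, fun i => Equiv.ofFiberEquiv_map e i⟩



/-- Every finite-or-countable multiset is represented by a countable family. -/
lemma exists_rep {α : Type} (f : MCount α) :
    ∃ (ι : Type) (_ : Countable ι) (u : ι → α), ∀ a, f.1 a = cnt u a := by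
  haveI : Countable ↥(Function.support f.1) := f.2.to_subtype
  refine ⟨(Σ a : ↥(Function.support f.1), {n : ℕ // (n : ℕ∞) < f.1 a.1}), inferInstance,
    fun x => x.1.1, fun a => ?_⟩
  by_cases ha : f.1 a = 0
  · rw [ha]
    symm
    rw [cnt, Set.encard_eq_zero]
    ext x
    simp only [Set.mem_preimage, Set.mem_singleton_iff, Set.mem_empty_iff_false, iff_false]
    intro hx
    exact x.1.2 (hx ▸ ha)
  · have e : ((fun (x : (Σ a : ↥(Function.support f.1), {n : ℕ // (n : ℕ∞) < f.1 a.1})) => x.1.1) ⁻¹' {a})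
        ≃ {n : ℕ | (n : ℕ∞) < f.1 a} :=
      { toFun := fun x => ⟨x.1.2.1, by
          have h2 := x.1.2.2
          have h3 : x.1.1.1 = a := x.2
          exact h2.trans_le (le_of_eq (congrArg f.1 h3))⟩
        invFun := fun n => ⟨⟨⟨a, ha⟩, ⟨n.1, n.2⟩⟩, rfl⟩
        left_inv := fun x => by
          obtain ⟨⟨⟨a', ha'⟩, n⟩, hx⟩ := x
          obtain rfl : a' = a := hx
          rfl
        right_inv := fun n => rfl }
    rw [cnt, Set.encard_congr e, encard_Iio]

/-- Characterization of the relational lifting via representing families. -/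
lemma mrel_iff {α β : Type} (R : Rel' α β) (f : MCount α) (g : MCount β) :
    MRel R f g ↔ ∃ (ι : Type) (_ : Countable ι) (u : ι → α) (v : ι → β),
      (∀ i, R (u i) (v i)) ∧ (∀ a, f.1 a = cnt u a) ∧ (∀ b, g.1 b = cnt v b) := by
  constructor
  · rintro ⟨k, hR, hf, hg⟩
    obtain ⟨ι, _, t, ht⟩ := exists_rep k
    refine ⟨ι, ‹_›, fun i => (t i).1, fun i => (t i).2, fun i => ?_, fun a => ?_, fun b => ?_⟩
    · have hk : k.1 (t i) ≠ 0 := by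
        rw [ht (t i)]
        exact Set.encard_ne_zero.mpr ⟨i, rfl⟩
      exact hR (t i) hk
    · apply E_inj
      rw [(SS_eq_iff).mp (hf a)]
      have : ∀ b, k.1 (a, b) = cnt (fun i => ((t i).1, (t i).2)) (a, b) := by
        intro b
        rw [ht (a, b)]
      simp_rw [this]
      exact E_cnt_pair_fst (fun i => (t i).1) (fun i => (t i).2) a
    · apply E_inj
      rw [(SS_eq_iff).mp (hg b)]
      have : ∀ a, k.1 (a, b) = cnt (fun i => ((t i).1, (t i).2)) (a, b) := by
        intro a
        rw [ht (a, b)]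
      simp_rw [this]
      exact E_cnt_pair_snd (fun i => (t i).1) (fun i => (t i).2) b
  · rintro ⟨ι, _, u, v, hR, hf, hg⟩
    refine ⟨⟨cnt (fun i => (u i, v i)), cnt_support _⟩, fun p hp => ?_, fun a => ?_, fun b => ?_⟩
    · obtain ⟨i, hi⟩ := Set.nonempty_of_encard_ne_zero (s := (fun i => (u i, v i)) ⁻¹' {p}) hp
      have h1 : (u i, v i) = p := hi
      rw [← h1]
      exact hR i
    · rw [SS_eq_iff, hf a]
      exact (E_cnt_pair_fst u v a).symm
    · rw [SS_eq_iff, hg b]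
      exact (E_cnt_pair_snd u v b).symm

lemma E_msingle {α : Type} (a x : α) :
    ((msingle a x : ℕ∞) : ℝ≥0∞) = ind (x = a) := by
  unfold msingle
  by_cases h : x = a
  · rw [if_pos h, ind_pos h, ENat.toENNReal_one]
  · rw [if_neg h, ind_neg h, ENat.toENNReal_zero]

lemma msingle_support {α : Type} (a : α) : (Function.support (msingle a)).Countable := by
  apply (Set.countable_singleton a).mono
  intro x hx
  unfold msingle at hx
  by_contra hxa
  exact hx (if_neg (by simpa using hxa))

lemma E_flatten {α : Type} (M : MCount (MCount α)) (a : α) :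
    ((flattenC M a : ℕ∞) : ℝ≥0∞) = ∑' μ : MCount α, (M.1 μ : ℝ≥0∞) * ((μ.1 a : ℕ∞) : ℝ≥0∞) := by
  unfold flattenC
  rw [toE_SS]
  exact tsum_congr fun μ => ENat.toENNReal_mul _ _

lemma flatten_support {α : Type} (M : MCount (MCount α)) :
    (Function.support (flattenC M)).Countable := by
  haveI : Countable ↥(Function.support M.1) := M.2.to_subtype
  apply (Set.countable_iUnion (fun μ : ↥(Function.support M.1) => (μ.1 : MCount α).2)).mono
  intro a ha
  have h1 : ∃ μ : MCount α, M.1 μ * μ.1 a ≠ 0 := by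
    by_contra hc
    push_neg at hc
    exact ha (SS_eq_zero_iff.mpr hc)
  obtain ⟨μ, hμ⟩ := h1
  rw [mul_ne_zero_iff] at hμ
  exact Set.mem_iUnion.mpr ⟨⟨μ, hμ.1⟩, hμ.2⟩

/-- `flattenC` packaged as a map `MCount (MCount α) → MCount α`. -/
noncomputable def flat {α : Type} (X : MCount (MCount α)) : MCount α :=
  ⟨flattenC X, flatten_support X⟩

lemma E_flatten_rep {α κ : Type} (N : MCount (MCount α)) (w : κ → MCount α)
    (hw : ∀ ν, N.1 ν = cnt w ν) (b : α) :
    ((flattenC N b : ℕ∞) : ℝ≥0∞) = ∑' j : κ, (((w j).1 b : ℕ∞) : ℝ≥0∞) := by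
  rw [E_flatten]
  simp_rw [hw]
  exact tsum_cnt_mul w (fun ν => ((ν.1 b : ℕ∞) : ℝ≥0∞))

lemma SS_support {κ α : Type} [Countable κ] (G : κ → MCount α) :
    (Function.support fun a => ⨆ s : Finset κ, ∑ j ∈ s, (G j).1 a).Countable := by
  apply (Set.countable_iUnion (fun j : κ => (G j).2)).mono
  intro a ha
  have h1 : ∃ j, (G j).1 a ≠ 0 := by
    by_contra hc
    push_neg at hc
    exact ha (SS_eq_zero_iff.mpr hc)
  obtain ⟨j, hj⟩ := h1
  exact Set.mem_iUnion.mpr ⟨j, hj⟩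

/-- sum of a countable family of multisets -/
noncomputable def msum {κ α : Type} [Countable κ] (G : κ → MCount α) : MCount α :=
  ⟨fun a => ⨆ s : Finset κ, ∑ j ∈ s, (G j).1 a, SS_support G⟩

lemma E_msum {κ α : Type} [Countable κ] (G : κ → MCount α) (a : α) :
    (((msum G).1 a : ℕ∞) : ℝ≥0∞) = ∑' j : κ, (((G j).1 a : ℕ∞) : ℝ≥0∞) := toE_SS _


lemma ind_congr {P Q : Prop} (h : P ↔ Q) : ind P = ind Q := by
  by_cases hp : P
  · rw [ind_pos hp, ind_pos (h.mp hp)]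
  · rw [ind_neg hp, ind_neg (fun hq => hp (h.mpr hq))]

lemma tsum_ind_single' {β : Type} (b : β) (m : β → ℝ≥0∞) :
    ∑' c : β, ind (c = b) * m c = m b := by
  rw [show (fun c => ind (c = b) * m c) = (fun c => ind (b = c) * m c) from
    funext fun c => by rw [ind_congr (eq_comm)]]
  exact tsum_ind_single b m

lemma msingle_eq_cnt {α : Type} (x y : α) : msingle x y = cnt (fun _ : PUnit => x) y := by
  unfold msingle cnt
  by_cases h : y = x
  · rw [if_pos h]
    symm
    rw [Set.encard_eq_one]
    refine ⟨PUnit.unit, Set.eq_singleton_iff_unique_mem.mpr ⟨?_, fun i _ => rfl⟩⟩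
    show x = y
    exact h.symm
  · rw [if_neg h]
    symm
    rw [Set.encard_eq_zero]
    exact Set.eq_empty_iff_forall_notMem.mpr fun i hi => h (Set.mem_singleton_iff.mp hi).symm

lemma flatten_single {α : Type} (g : MCount α) :
    flattenC ⟨msingle g, msingle_support g⟩ = g.1 := by
  funext a
  apply E_inj
  refine (E_flatten _ a).trans ?_
  calc ∑' μ : MCount α, ((msingle g μ : ℕ∞) : ℝ≥0∞) * ((μ.1 a : ℕ∞) : ℝ≥0∞)
      = ∑' μ : MCount α, ind (μ = g) * ((μ.1 a : ℕ∞) : ℝ≥0∞) := by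
        refine tsum_congr fun μ => ?_
        rw [E_msingle]
    _ = ((g.1 a : ℕ∞) : ℝ≥0∞) := tsum_ind_single' g _

lemma E_cnt_sigma {κ α : Type} {T : κ → Type} (m : ∀ j, T j → α) (a : α) :
    ((cnt (fun x : Σ j, T j => m x.1 x.2) a : ℕ∞) : ℝ≥0∞)
      = ∑' j : κ, ((cnt (m j) a : ℕ∞) : ℝ≥0∞) := by
  rw [E_cnt, ENNReal.tsum_sigma']
  exact tsum_congr fun j => (E_cnt (m j) a).symm

end CME


/-- For any set `A`, finite-or-countable multisets `M_count(A)` with multiset sum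
form a commutative monoid in which countable sums are well defined; the relational
lifting `MRel` makes `A ↦ M_count(A)` a functor on `Rel`, which carries a comonad
structure given by dereliction and countable digging, generalizing the
finite-multiset exponential. -/
theorem countable_multiset_exponential :
    -- commutative monoid structure, with well-defined countable sums
    (∀ (α : Type) (f g : MCount α), (Function.support (madd f g)).Countable) ∧
    ((∀ (α : Type), (Function.support (mzero α)).Countable)) ∧
    (∀ (α : Type) (f g : MCount α), madd f g = madd g f) ∧
    (∀ (α : Type) (f g h : MCount α) (hfg : (Function.support (madd f g)).Countable)
        (hgh : (Function.support (madd g h)).Countable),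
      madd ⟨madd f g, hfg⟩ h = madd f ⟨madd g h, hgh⟩) ∧
    (∀ (α : Type) (f : MCount α) (h0 : (Function.support (mzero α)).Countable),
      madd ⟨mzero α, h0⟩ f = f.1) ∧
    (∀ (α : Type) (g : ℕ → MCount α), (Function.support (csum g)).Countable) ∧
    -- functoriality of the relational lifting
    (∀ (α : Type), MRel (rid α) = rid (MCount α)) ∧
    (∀ (α β γ : Type) (R : Rel' α β) (S : Rel' β γ),
      MRel (rcomp R S) = rcomp (MRel R) (MRel S)) ∧
    -- naturality of dereliction and digging
    (∀ (α β : Type) (R : Rel' α β),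
      rcomp (MRel R) (derC β) = rcomp (derC α) R) ∧
    (∀ (α β : Type) (R : Rel' α β),
      rcomp (MRel R) (digC β) = rcomp (digC α) (MRel (MRel R))) ∧
    -- comonad laws
    (∀ (α : Type), rcomp (digC α) (derC (MCount α)) = rid (MCount α)) ∧
    (∀ (α : Type), rcomp (digC α) (MRel (derC α)) = rid (MCount α)) ∧
    (∀ (α : Type),
      rcomp (digC α) (digC (MCount α)) = rcomp (digC α) (MRel (digC α))) := by
  open CME in
  refine ⟨?_, ?_, ?_, ?_, ?_, ?_, ?_, ?_, ?_, ?_, ?_, ?_, ?_⟩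
  · -- madd support countable
    intro α f g
    apply (f.2.union g.2).mono
    intro a ha
    by_contra hc
    simp only [Set.mem_union, Function.mem_support, not_or, not_not] at hc
    exact ha (by simp [madd, hc.1, hc.2])
  · -- mzero support countable
    intro α
    have h : Function.support (mzero α) = ∅ := by
      ext a; simp [mzero]
    rw [h]
    exact Set.countable_empty
  · -- comm
    intro α f g
    funext a
    exact add_comm (f.1 a) (g.1 a)
  · -- assoc
    intro α f g h hfg hgh
    funext a
    exact add_assoc (f.1 a) (g.1 a) (h.1 a)
  · -- zero_add
    intro α f h0
    funext a
    exact zero_add (f.1 a)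
  · -- csum support countable
    intro α g
    exact SS_support g
  · -- MRel id
    intro α
    funext f g
    apply propext
    constructor
    · intro h
      rw [mrel_iff] at h
      obtain ⟨ι, _, u, v, hR, hf, hg⟩ := h
      show f = g
      apply Subtype.ext
      funext a
      rw [hf a, hg a]
      congr 1
      exact funext fun i => hR i
    · intro h
      obtain rfl : f = g := h
      rw [mrel_iff]
      obtain ⟨ι, ic, u, hu⟩ := exists_rep f
      exact ⟨ι, ic, u, u, fun i => rfl, hu, hu⟩
  · -- MRel comp
    intro α β γ R S
    funext f g
    apply propext
    constructor
    · intro h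
      rw [mrel_iff] at h
      obtain ⟨ι, ic, u, v, hRS, hf, hg⟩ := h
      choose w hw1 hw2 using hRS
      haveI := ic
      refine ⟨⟨cnt w, cnt_support w⟩, ?_, ?_⟩
      · apply (mrel_iff _ _ _).mpr; exact ⟨ι, ic, u, w, hw1, hf, fun b => rfl⟩
      · apply (mrel_iff _ _ _).mpr; exact ⟨ι, ic, w, v, hw2, fun b => rfl, hg⟩
    · rintro ⟨h, h1, h2⟩
      rw [mrel_iff] at h1 h2 ⊢
      obtain ⟨ι, ic, u, v, hR, hf, hh⟩ := h1
      obtain ⟨κ, kc, p, q, hS, hh', hg⟩ := h2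
      haveI := ic; haveI := kc
      obtain ⟨φ, hφ⟩ := exists_matching v p (fun b => (hh b).symm.trans (hh' b))
      refine ⟨ι, ic, u, fun i => q (φ i), fun i => ⟨v i, hR i, hφ i ▸ hS (φ i)⟩, hf, fun c => ?_⟩
      rw [cnt_comp_equiv φ q c]
      exact hg c
  · -- naturality of dereliction
    intro α β R
    funext f b
    apply propext
    constructor
    · rintro ⟨g, hMR, hgb⟩
      rw [mrel_iff] at hMR
      obtain ⟨ι, ic, u, v, hR, hf, hg⟩ := hMR
      have h1 : cnt v b = 1 := by
        rw [← hg b, hgb]; unfold msingle; rw [if_pos rfl]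
      have h0 : ∀ b', b' ≠ b → cnt v b' = 0 := fun b' hb' => by
        rw [← hg b', hgb]; unfold msingle; rw [if_neg hb']
      obtain ⟨i₀, hi₀⟩ := Set.encard_eq_one.mp h1
      have hall : ∀ i, v i = b := by
        intro i
        by_contra hvi
        have hmem : i ∈ v ⁻¹' {v i} := rfl
        rw [Set.encard_eq_zero.mp (h0 (v i) hvi)] at hmem
        exact hmem
      have huniq : ∀ i, i = i₀ := by
        intro i
        have hmem : i ∈ v ⁻¹' {b} := hall i
        rw [hi₀] at hmem
        exact hmem
      refine ⟨u i₀, ?_, ?_⟩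
      · show f.1 = msingle (u i₀)
        funext a
        rw [hf a]
        unfold msingle
        by_cases h : a = u i₀
        · rw [if_pos h]
          rw [cnt, Set.encard_eq_one]
          refine ⟨i₀, Set.eq_singleton_iff_unique_mem.mpr ⟨?_, fun i _ => huniq i⟩⟩
          show u i₀ = a
          exact h.symm
        · rw [if_neg h]
          rw [cnt, Set.encard_eq_zero]
          refine Set.eq_empty_iff_forall_notMem.mpr fun i hi => ?_
          have h2 : u i = a := hi
          rw [huniq i] at h2
          exact h (h2.symm)
      · have h2 := hR i₀
        rwa [hall i₀] at h2
    · rintro ⟨a, hfa, hab⟩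
      refine ⟨⟨msingle b, msingle_support b⟩, ?_, rfl⟩
      apply (mrel_iff _ _ _).mpr
      refine ⟨PUnit, inferInstance, fun _ => a, fun _ => b, fun _ => hab,
        fun a' => ?_, fun b' => ?_⟩
      · rw [hfa]
        exact msingle_eq_cnt a a'
      · exact msingle_eq_cnt b b'
  · -- naturality of digging
    intro α β R
    funext f N
    apply propext
    constructor
    · rintro ⟨g, hMR, hgN⟩
      obtain ⟨κ, kc, W, hW⟩ := exists_rep N
      haveI := kc
      rw [mrel_iff] at hMR
      obtain ⟨ι, ic, u, v, hR, hf, hg⟩ := hMR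
      haveI := ic
      choose T hTc U hU using fun j => exists_rep (W j)
      haveI : ∀ j, Countable (T j) := hTc
      have hvt : ∀ b, cnt v b = cnt (fun x : Σ j, T j => U x.1 x.2) b := by
        intro b
        apply E_inj
        rw [E_cnt_sigma U b, ← hg b]
        have hgN' : g.1 b = flattenC N b := by rw [hgN]
        rw [hgN', E_flatten_rep N W hW b]
        exact tsum_congr fun j => by rw [hU j b]
      obtain ⟨φ, hφ⟩ := exists_matching v (fun x : Σ j, T j => U x.1 x.2) hvt
      set F : κ → MCount α :=
        fun j => ⟨cnt (fun x : T j => u (φ.symm ⟨j, x⟩)), cnt_support _⟩ with hF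
      refine ⟨⟨cnt F, cnt_support F⟩, ?_, ?_⟩
      · show f.1 = flattenC _
        funext a
        apply E_inj
        refine Eq.trans ?_ (E_flatten_rep ⟨cnt F, cnt_support F⟩ F (fun μ => rfl) a).symm
        rw [hf a]
        calc ((cnt u a : ℕ∞) : ℝ≥0∞)
            = ∑' i : ι, ind (u i = a) := E_cnt u a
          _ = ∑' y : Σ j, T j, ind (u (φ.symm y) = a) := (φ.symm.tsum_eq _).symm
          _ = ∑' j : κ, ∑' x : T j, ind (u (φ.symm ⟨j, x⟩) = a) := ENNReal.tsum_sigma' _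
          _ = ∑' j : κ, (((F j).1 a : ℕ∞) : ℝ≥0∞) :=
              tsum_congr fun j => (E_cnt (fun x : T j => u (φ.symm ⟨j, x⟩)) a).symm
      · apply (mrel_iff _ _ _).mpr
        refine ⟨κ, kc, F, W, fun j => ?_, fun μ => rfl, hW⟩
        rw [mrel_iff]
        refine ⟨T j, hTc j, fun x => u (φ.symm ⟨j, x⟩), U j, fun x => ?_, fun a => rfl, hU j⟩
        have h1 := hφ (φ.symm ⟨j, x⟩)
        rw [Equiv.apply_symm_apply] at h1
        have h2 := hR (φ.symm ⟨j, x⟩)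
        rw [← h1] at h2
        exact h2
    · rintro ⟨M, hfM, hMN⟩
      rw [mrel_iff] at hMN
      obtain ⟨κ, kc, F, G, hFG, hM, hN⟩ := hMN
      haveI := kc
      choose T hTc uu vv hprop using fun j => (mrel_iff R (F j) (G j)).mp (hFG j)
      haveI : ∀ j, Countable (T j) := hTc
      refine ⟨msum G, ?_, ?_⟩
      · rw [mrel_iff]
        refine ⟨Σ j, T j, inferInstance, fun x => uu x.1 x.2, fun x => vv x.1 x.2,
          fun x => (hprop x.1).1 x.2, fun a => ?_, fun b => ?_⟩
        · apply E_inj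
          have hfM' : f.1 a = flattenC M a := by rw [hfM]
          rw [hfM', E_flatten_rep M F hM a, E_cnt_sigma uu a]
          exact tsum_congr fun j => by rw [← (hprop j).2.1 a]
        · apply E_inj
          rw [E_msum, E_cnt_sigma vv b]
          exact tsum_congr fun j => by rw [← (hprop j).2.2 b]
      · show (msum G).1 = flattenC N
        funext b
        apply E_inj
        rw [E_msum, E_flatten_rep N G hN b]
  · -- dig ; der = id
    intro α
    funext f g
    apply propext
    constructor
    · rintro ⟨M, hfM, hMg⟩
      show f = g
      apply Subtype.ext
      have hM : M = ⟨msingle g, msingle_support g⟩ := Subtype.ext hMg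
      rw [hfM, hM]
      exact flatten_single g
    · intro h
      obtain rfl : f = g := h
      exact ⟨⟨msingle f, msingle_support f⟩, (flatten_single f).symm, rfl⟩
  · -- dig ; MRel der = id
    intro α
    funext f g
    apply propext
    constructor
    · rintro ⟨M, hfM, hMg⟩
      show f = g
      rw [mrel_iff] at hMg
      obtain ⟨ι, ic, U, v, hder, hM, hg⟩ := hMg
      haveI := ic
      apply Subtype.ext
      funext a
      apply E_inj
      have hfM' : f.1 a = flattenC M a := by rw [hfM]
      rw [hfM', E_flatten_rep M U hM a, hg a, E_cnt]
      refine tsum_congr fun i => ?_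
      have h1 : (U i).1 = msingle (v i) := hder i
      rw [h1, E_msingle]
      exact ind_congr eq_comm
    · intro h
      obtain rfl : f = g := h
      obtain ⟨ι, ic, u, hu⟩ := exists_rep f
      haveI := ic
      refine ⟨⟨cnt (fun i => (⟨msingle (u i), msingle_support (u i)⟩ : MCount α)),
        cnt_support _⟩, ?_, ?_⟩
      · show f.1 = flattenC _
        funext a
        apply E_inj
        refine Eq.trans ?_ (E_flatten_rep ⟨cnt (fun i => (⟨msingle (u i), msingle_support (u i)⟩ : MCount α)), cnt_support _⟩ _ (fun ν => rfl) a).symm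
        rw [hu a, E_cnt]
        refine tsum_congr fun i => ?_
        show ind (u i = a) = ((msingle (u i) a : ℕ∞) : ℝ≥0∞)
        rw [E_msingle]
        exact ind_congr eq_comm
      · apply (mrel_iff _ _ _).mpr
        exact ⟨ι, ic, fun i => (⟨msingle (u i), msingle_support (u i)⟩ : MCount α), u,
          fun i => rfl, fun μ => rfl, hu⟩
  · -- dig ; dig = dig ; MRel dig
    intro α
    funext f W
    apply propext
    constructor
    · rintro ⟨M, hfM, hMW⟩
      obtain ⟨κ, kc, Ω, hΩ⟩ := exists_rep W
      haveI := kc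
      refine ⟨⟨cnt (fun j => flat (Ω j)), cnt_support _⟩, ?_, ?_⟩
      · show f.1 = flattenC _
        funext a
        apply E_inj
        have hfM' : f.1 a = flattenC M a := by rw [hfM]
        rw [hfM', E_flatten_rep ⟨cnt (fun j => flat (Ω j)), cnt_support _⟩
          (fun j => flat (Ω j)) (fun ν => rfl) a]
        calc ((flattenC M a : ℕ∞) : ℝ≥0∞)
            = ∑' μ : MCount α, ((M.1 μ : ℕ∞) : ℝ≥0∞) * ((μ.1 a : ℕ∞) : ℝ≥0∞) := E_flatten M a
          _ = ∑' μ : MCount α, (∑' j : κ, (((Ω j).1 μ : ℕ∞) : ℝ≥0∞)) * ((μ.1 a : ℕ∞) : ℝ≥0∞) := by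
              refine tsum_congr fun μ => ?_
              have h1 : M.1 μ = flattenC W μ := by rw [hMW]
              rw [h1, E_flatten_rep W Ω hΩ μ]
          _ = ∑' μ : MCount α, ∑' j : κ, (((Ω j).1 μ : ℕ∞) : ℝ≥0∞) * ((μ.1 a : ℕ∞) : ℝ≥0∞) :=
              tsum_congr fun μ => ENNReal.tsum_mul_right.symm
          _ = ∑' j : κ, ∑' μ : MCount α, (((Ω j).1 μ : ℕ∞) : ℝ≥0∞) * ((μ.1 a : ℕ∞) : ℝ≥0∞) :=
              ENNReal.tsum_comm
          _ = ∑' j : κ, (((flat (Ω j)).1 a : ℕ∞) : ℝ≥0∞) :=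
              tsum_congr fun j => (E_flatten (Ω j) a).symm
      · apply (mrel_iff _ _ _).mpr
        exact ⟨κ, kc, fun j => flat (Ω j), Ω, fun j => rfl, fun μ => rfl, hΩ⟩
    · rintro ⟨M', hfM', hM'W⟩
      rw [mrel_iff] at hM'W
      obtain ⟨κ, kc, P, Ω, hdig, hM', hΩ⟩ := hM'W
      haveI := kc
      refine ⟨msum Ω, ?_, ?_⟩
      · show f.1 = flattenC (msum Ω)
        funext a
        apply E_inj
        have hfM'' : f.1 a = flattenC M' a := by rw [hfM']
        rw [hfM'', E_flatten_rep M' P hM' a]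
        calc ∑' j : κ, (((P j).1 a : ℕ∞) : ℝ≥0∞)
            = ∑' j : κ, ((flattenC (Ω j) a : ℕ∞) : ℝ≥0∞) := by
              refine tsum_congr fun j => ?_
              rw [hdig j]
          _ = ∑' j : κ, ∑' μ : MCount α, (((Ω j).1 μ : ℕ∞) : ℝ≥0∞) * ((μ.1 a : ℕ∞) : ℝ≥0∞) :=
              tsum_congr fun j => E_flatten (Ω j) a
          _ = ∑' μ : MCount α, ∑' j : κ, (((Ω j).1 μ : ℕ∞) : ℝ≥0∞) * ((μ.1 a : ℕ∞) : ℝ≥0∞) :=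
              ENNReal.tsum_comm
          _ = ∑' μ : MCount α, (((msum Ω).1 μ : ℕ∞) : ℝ≥0∞) * ((μ.1 a : ℕ∞) : ℝ≥0∞) := by
              refine tsum_congr fun μ => ?_
              rw [E_msum, ENNReal.tsum_mul_right]
          _ = ((flattenC (msum Ω) a : ℕ∞) : ℝ≥0∞) := (E_flatten (msum Ω) a).symm
      · show (msum Ω).1 = flattenC W
        funext μ
        apply E_inj
        rw [E_msum, E_flatten_rep W Ω hΩ μ]
end
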